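/- The twisted derivations on 'f preserve the radical of the bilinear form: for all i ∈ I and all x, y ∈ 'f one has (θ_i y, x) = (θ_i, θ_i)(y, ᵢr(x)) and (y θ_i, x) = (θ_i, θ_i)(y, rᵢ(x)); consequently ᵢr and rᵢ descend to f = 'f/Rad. Moreover if x ∈ f has nonzero weight ν ∈ ℕ[I] and rᵢ(x) = 0 for all i ∈ I, then x = 0. -/

import Mathlib

/- The ring `Aq = ℚ(q)[π]/(π²-1) ≅ ℚ(q) × ℚ(q)` (via π ↦ (1, -1), an isomorphism
since 2 is invertible).  Division/inversion is componentwise (the total fraction ring). -/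
noncomputable section

abbrev Aq : Type := RatFunc ℚ × RatFunc ℚ

/-- the element `q` -/
def qA : Aq := (RatFunc.X, RatFunc.X)

/-- the element `π`, satisfying `π² = 1` -/
def pA : Aq := (1, -1)

/-- The `(q,π)`-binomial coefficient
`[[a;t]] = (∏_{s=0}^{t-1} ((πq)^{a-s} - q^{s-a})) / (∏_{s=1}^{t} ((πq)^s - q^{-s}))`. -/
def qbinom (a : ℤ) (t : ℕ) : Aq :=
  (∏ s ∈ Finset.range t, ((pA * qA) ^ (a - (s : ℤ)) - qA ^ ((s : ℤ) - a))) /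
  (∏ s ∈ Finset.range t, ((pA * qA) ^ ((s : ℤ) + 1) - qA ^ (-((s : ℤ) + 1))))


/-- A super Cartan datum: `I = I₀ ⊔ I₁` (parity `p : I → {0,1}`), symmetric form `Bf`,
with `Bf i i = 2 d i > 0`, `⟨i,j'⟩ = aij i j = 2(i·j)/(i·i) ∈ -ℕ` for `i ≠ j`,
even for odd `i`, and `I₁ ≠ ∅`. -/
structure SCD (I : Type) (Bf : I → I → ℤ) (p d : I → ℕ) (aij : I → I → ℤ) : Prop where
  symm : ∀ i j, Bf i j = Bf j i
  diag : ∀ i, Bf i i = 2 * (d i : ℤ)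
  dpos : ∀ i, 0 < d i
  div : ∀ i j, (d i : ℤ) * aij i j = Bf i j
  offdiag : ∀ i j, i ≠ j → aij i j ≤ 0
  par_le : ∀ i, p i ≤ 1
  odd_even : ∀ i j, p i = 1 → Even (aij i j)
  odd_nonempty : ∃ i, p i = 1

/-- the pairing `|w|·|w'|` of the weights of two words -/
def wtB {I : Type} (Bf : I → I → ℤ) (w w' : FreeMonoid I) : ℤ :=
  ((FreeMonoid.toList w).map fun i =>
    ((FreeMonoid.toList w').map fun j => Bf i j).sum).sum

/-- the parity `p(w)` of a word -/
def par {I : Type} (p : I → ℕ) (w : FreeMonoid I) : ℕ :=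
  ((FreeMonoid.toList w).map p).sum

/-- the twisting factor `q^{|w|·|w'|} π^{p(w)p(w')}` -/
def tw {I : Type} (Bf : I → I → ℤ) (p : I → ℕ) (w w' : FreeMonoid I) : Aq :=
  qA ^ wtB Bf w w' * pA ^ (par p w * par p w')

/-- the free associative superalgebra `'f` on generators `θ_i`, realized as the monoid
algebra of the free monoid on `I` (so the words are the standard homogeneous basis) -/
abbrev FF (I : Type) : Type := MonoidAlgebra Aq (FreeMonoid I)

/-- the basis element of `'f` corresponding to a word `w` -/
def ofW {I : Type} (w : FreeMonoid I) : FF I := MonoidAlgebra.of Aq (FreeMonoid I) w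

/-- the generator `θ_i` -/
def th {I : Type} (i : I) : FF I := ofW (FreeMonoid.of i)

/-- `q_i = q^{i·i/2}` -/
def qi {I : Type} (d : I → ℕ) (i : I) : Aq := qA ^ d i

/-- `π_i = π^{p(i)}` -/
def pi' {I : Type} (p : I → ℕ) (i : I) : Aq := pA ^ p i

/-- `[m]_i = ((π_i q_i)^m - q_i^{-m})/(π_i q_i - q_i^{-1})` -/
def qinti {I : Type} (p d : I → ℕ) (i : I) (m : ℕ) : Aq :=
  ((pi' p i * qi d i) ^ m - qi d i ^ (-(m : ℤ))) / (pi' p i * qi d i - (qi d i)⁻¹)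

/-- `[m]_i! = ∏_{s=1}^m [s]_i` -/
def qfacti {I : Type} (p d : I → ℕ) (i : I) (m : ℕ) : Aq :=
  ∏ s ∈ Finset.range m, qinti p d i (s + 1)

/-- the divided power `θ_i^{(n)} = θ_i^n/[n]_i!` -/
def thpow {I : Type} (p d : I → ℕ) (i : I) (n : ℕ) : FF I :=
  (qfacti p d i n)⁻¹ • th i ^ n

/-- The defining properties of the bilinear form `(·,·)` on `'f`:
`(1,1)=1`, `(θ_i,θ_j) = δ_{ij}(1-π_i q_i^{-2})^{-1}`, `(x, y'y'') = (r(x), y'⊗y'')` and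
`(xx', y'') = (x⊗x', r(y''))`, where the form on the twisted tensor square `T2` is
`(x₁⊗x₂, x₁'⊗x₂') = (x₁,x₁')(x₂,x₂')` (expressed by expanding along the basis `b2`). -/
structure FormProps (I : Type) [DecidableEq I] (Bf : I → I → ℤ) (p d : I → ℕ)
    (T2 : Type) [Ring T2] [Algebra Aq T2]
    (b2 : Module.Basis (FreeMonoid I × FreeMonoid I) Aq T2)
    (r : FF I →ₐ[Aq] T2)
    (B : FF I →ₗ[Aq] FF I →ₗ[Aq] Aq) : Prop where
  one_one : B 1 1 = 1
  gen : ∀ i j, B (th i) (th j) =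
      if i = j then (1 - pi' p i * qi d i ^ (-2 : ℤ))⁻¹ else 0
  mul_right : ∀ x y' y'', B x (y' * y'') =
      (b2.repr (r x)).sum fun pr c => c * B (ofW pr.1) y' * B (ofW pr.2) y''
  mul_left : ∀ x x' y'', B (x * x') y'' =
      (b2.repr (r y'')).sum fun pr c => c * B x (ofW pr.1) * B x' (ofW pr.2)

/-- reversal of a word -/
def revW {I : Type} (w : FreeMonoid I) : FreeMonoid I :=
  FreeMonoid.ofList (FreeMonoid.toList w).reverse

/-- the weight `|w| ∈ ℕ[I]` of a word -/
def wtF {I : Type} (w : FreeMonoid I) : I →₀ ℕ :=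
  ((FreeMonoid.toList w).map fun i => Finsupp.single i 1).sum

/-!
Expand `r(x) = Σ c_{u,v} u ⊗ v` in the basis of pairs of words. Since `(θ_i, w) = 0` unless the
word `w` is `θ_i`, the identity `(x x', y) = (x ⊗ x', r(y))` collapses to
`(θ_i y, x) = (θ_i, θ_i)(y, ᵢr(x))` once one knows that the `θ_i ⊗ –` component of `r(x)` is
`ᵢr(x)`; on words this is an induction using `r(θ_j) = θ_j ⊗ 1 + 1 ⊗ θ_j` and the twisted product
of `'f ⊗ 'f`. The same argument applied to `(x, y' y'') = (r(x), y' ⊗ y'')` gives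
`(x, θ_i y) = (θ_i, θ_i)(ᵢr(x), y)` and `(x, y θ_i) = (θ_i, θ_i)(rᵢ(x), y)`. As
`(θ_i, θ_i) = (1 - π_i q_i⁻²)⁻¹` is a unit of `ℚ(q)[π]/(π² - 1)`, these show that `ᵢr` and `rᵢ`
preserve the radical. Finally, an `x` of nonzero weight is orthogonal to `1`, and the last identity
makes it orthogonal to every nonempty word `y θ_i` once all the `rᵢ(x)` lie in the radical.
-/

namespace FreeMonoid

variable {α : Type*}

instance [DecidableEq α] : DecidableEq (FreeMonoid α) := inferInstanceAs (DecidableEq (List α))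

theorem of_mul_eq_of_iff {a b : α} {w : FreeMonoid α} : of a * w = of b ↔ a = b ∧ w = 1 := by
  simp [← toList.injective.eq_iff]

theorem mul_of_eq_of_iff {a b : α} {w : FreeMonoid α} : w * of a = of b ↔ w = 1 ∧ a = b := by
  simp [← toList.injective.eq_iff, toList_mul, List.append_eq_singleton_iff]

theorem of_mul_ne_one (a : α) (w : FreeMonoid α) : of a * w ≠ 1 := by
  simp [← toList.injective.eq_iff]

theorem mul_of_ne_one (a : α) (w : FreeMonoid α) : w * of a ≠ 1 := by
  simp [← toList.injective.eq_iff, toList_mul]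

@[elab_as_elim]
theorem inductionOn_mul_of {motive : FreeMonoid α → Prop} (w : FreeMonoid α) (one : motive 1)
    (mul_of : ∀ w a, motive w → motive (w * of a)) : motive w := by
  rw [← ofList_toList w]
  induction toList w using List.reverseRecOn with
  | nil => exact one
  | append_singleton l a ih => exact mul_of _ a ih

end FreeMonoid

theorem RatFunc.one_sub_C_mul_inv_X_pow_ne_zero {K : Type*} [Field K] {n : ℕ} (hn : 0 < n)
    (c : K) : 1 - RatFunc.C c * (RatFunc.X ^ n)⁻¹ ≠ 0 := by
  have hX : (RatFunc.X : RatFunc K) ^ n ≠ RatFunc.C c := fun h =>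
    Polynomial.X_pow_sub_C_ne_zero hn c <| RatFunc.algebraMap_injective K <| by
      simp [h, RatFunc.algebraMap_C]
  rw [sub_ne_zero, ← div_eq_mul_inv, ne_comm, Ne,
    div_eq_one_iff_eq (pow_ne_zero _ RatFunc.X_ne_zero)]
  exact hX.symm

theorem isUnit_one_sub_pi'_mul_qi_zpow {I : Type} (p d : I → ℕ) {i : I} (hd : 0 < d i) :
    IsUnit (1 - pi' p i * qi d i ^ (-2 : ℤ)) := by
  have h2d : 0 < d i * 2 := by omega
  rw [Prod.isUnit_iff, isUnit_iff_ne_zero, isUnit_iff_ne_zero]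
  simp only [pi', qi, pA, qA, Prod.fst_sub, Prod.snd_sub, Prod.fst_mul, Prod.snd_mul,
    Prod.fst_one, Prod.snd_one, Prod.pow_fst, Prod.pow_snd, Prod.fst_inv, Prod.snd_inv,
    zpow_neg, zpow_ofNat, ← pow_mul]
  constructor
  · simpa using RatFunc.one_sub_C_mul_inv_X_pow_ne_zero h2d (1 : ℚ)
  · simpa using RatFunc.one_sub_C_mul_inv_X_pow_ne_zero h2d ((-1 : ℚ) ^ p i)

section Words

variable {I : Type}

theorem ofW_one : ofW (1 : FreeMonoid I) = 1 := map_one _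

theorem ofW_mul (w w' : FreeMonoid I) : ofW (w * w') = ofW w * ofW w' := map_mul _ w w'

theorem th_def (i : I) : th i = ofW (FreeMonoid.of i) := rfl

theorem linearMap_ext_ofW {M : Type*} [AddCommMonoid M] [Module Aq M] {f g : FF I →ₗ[Aq] M}
    (h : ∀ w, f (ofW w) = g (ofW w)) : f = g :=
  (MonoidAlgebra.basis (FreeMonoid I) Aq).ext h

variable (Bf : I → I → ℤ) (p : I → ℕ)

theorem tw_one_left (w : FreeMonoid I) : tw Bf p 1 w = 1 := by
  simp [tw, wtB, par, FreeMonoid.toList_one]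

theorem tw_one_right (w : FreeMonoid I) : tw Bf p w 1 = 1 := by
  simp [tw, wtB, par, FreeMonoid.toList_one]

theorem tw_of_of (i j : I) :
    tw Bf p (FreeMonoid.of i) (FreeMonoid.of j) = pA ^ (p i * p j) * qA ^ Bf i j := by
  simp [tw, wtB, par, FreeMonoid.toList_of, mul_comm]

theorem wtB_of_of (i j : I) : wtB Bf (FreeMonoid.of i) (FreeMonoid.of j) = Bf i j := by
  simp [wtB, FreeMonoid.toList_of]

theorem par_of (i : I) : par p (FreeMonoid.of i) = p i := by
  simp [par, FreeMonoid.toList_of]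

end Words

section Slices

variable {I : Type} [DecidableEq I] {T2 : Type} [Ring T2] [Algebra Aq T2]
  (b2 : Module.Basis (FreeMonoid I × FreeMonoid I) Aq T2)

def leftSlice (u : FreeMonoid I) : T2 →ₗ[Aq] FF I :=
  b2.constr Aq fun pr => if pr.1 = u then ofW pr.2 else 0

def rightSlice (u : FreeMonoid I) : T2 →ₗ[Aq] FF I :=
  b2.constr Aq fun pr => if pr.2 = u then ofW pr.1 else 0

theorem leftSlice_basis (u w₁ w₂ : FreeMonoid I) :
    leftSlice b2 u (b2 (w₁, w₂)) = if w₁ = u then ofW w₂ else 0 :=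
  b2.constr_basis Aq _ _

theorem rightSlice_basis (u w₁ w₂ : FreeMonoid I) :
    rightSlice b2 u (b2 (w₁, w₂)) = if w₂ = u then ofW w₁ else 0 :=
  b2.constr_basis Aq _ _

theorem sum_repr_mul_eq_mul_leftSlice {u : FreeMonoid I} {a : Aq} {φ : FreeMonoid I → Aq}
    (hφ : ∀ w, φ w = if w = u then a else 0) (g : FF I →ₗ[Aq] Aq) (t : T2) :
    ((b2.repr t).sum fun pr c => c * φ pr.1 * g (ofW pr.2)) = a * g (leftSlice b2 u t) := by
  rw [leftSlice, Module.Basis.constr_apply, map_finsuppSum, Finsupp.mul_sum]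
  refine Finsupp.sum_congr fun pr _ => ?_
  rw [hφ]
  split_ifs <;> simp only [map_smul, smul_eq_mul, map_zero, smul_zero] <;> ring

theorem sum_repr_mul_eq_mul_rightSlice {u : FreeMonoid I} {a : Aq} {φ : FreeMonoid I → Aq}
    (hφ : ∀ w, φ w = if w = u then a else 0) (g : FF I →ₗ[Aq] Aq) (t : T2) :
    ((b2.repr t).sum fun pr c => c * g (ofW pr.1) * φ pr.2) = a * g (rightSlice b2 u t) := by
  rw [rightSlice, Module.Basis.constr_apply, map_finsuppSum, Finsupp.mul_sum]
  refine Finsupp.sum_congr fun pr _ => ?_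
  rw [hφ]
  split_ifs <;> simp only [map_smul, smul_eq_mul, map_zero, smul_zero] <;> ring

end Slices

section TwistedCoproduct

open FreeMonoid

variable {I : Type} {Bf : I → I → ℤ} {p d : I → ℕ}
  {T2 : Type} [Ring T2] [Algebra Aq T2] {b2 : Module.Basis (FreeMonoid I × FreeMonoid I) Aq T2}
  {r : FF I →ₐ[Aq] T2} {B : FF I →ₗ[Aq] FF I →ₗ[Aq] Aq}
  (hone : b2 (1, 1) = 1)
  (hmul : ∀ w1 w2 w1' w2',
    b2 (w1, w2) * b2 (w1', w2') = tw Bf p w2 w1' • b2 (w1 * w1', w2 * w2'))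
  (hr : ∀ i, r (th i) = b2 (of i, 1) + b2 (1, of i))

include hmul hr in
theorem r_th_mul_basis (j : I) (w₁ w₂ : FreeMonoid I) :
    r (th j) * b2 (w₁, w₂) = b2 (of j * w₁, w₂) + tw Bf p (of j) w₁ • b2 (w₁, of j * w₂) := by
  rw [hr, add_mul, hmul, hmul, tw_one_left, one_smul, one_mul, one_mul]

include hmul hr in
theorem basis_mul_r_th (j : I) (w₁ w₂ : FreeMonoid I) :
    b2 (w₁, w₂) * r (th j) = tw Bf p w₂ (of j) • b2 (w₁ * of j, w₂) + b2 (w₁, w₂ * of j) := by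
  rw [hr, mul_add, hmul, hmul, tw_one_right, one_smul, mul_one, mul_one]

include hone in
theorem sum_repr_r_one (F G : FreeMonoid I → Aq) :
    ((b2.repr (r 1)).sum fun pr c => c * F pr.1 * G pr.2) = F 1 * G 1 := by
  rw [map_one, ← hone, b2.repr_self, Finsupp.sum_single_index (by ring), one_mul]

include hr in
theorem sum_repr_r_th (j : I) (F G : FreeMonoid I → Aq) :
    ((b2.repr (r (th j))).sum fun pr c => c * F pr.1 * G pr.2) =
      F (of j) * G 1 + F 1 * G (of j) := by
  rw [hr, map_add, b2.repr_self, b2.repr_self, Finsupp.sum_add_index' (by simp) (by intros; ring),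
    Finsupp.sum_single_index (by ring), Finsupp.sum_single_index (by ring), one_mul, one_mul]

variable [DecidableEq I]

include hmul hr in
theorem leftSlice_one_r_th_mul (j : I) (t : T2) :
    leftSlice b2 1 (r (th j) * t) = th j * leftSlice b2 1 t := by
  suffices (leftSlice b2 1).comp (LinearMap.mulLeft Aq (r (th j))) =
      (LinearMap.mulLeft Aq (th j)).comp (leftSlice b2 1) from LinearMap.congr_fun this t
  refine b2.ext fun ⟨w₁, w₂⟩ => ?_
  simp only [LinearMap.comp_apply, LinearMap.mulLeft_apply, r_th_mul_basis hmul hr, map_add,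
    map_smul, leftSlice_basis, if_neg (of_mul_ne_one _ _)]
  split_ifs with h
  · simp [h, tw_one_right, ofW_mul, th_def]
  · simp

include hmul hr in
theorem leftSlice_of_r_th_mul (i j : I) (t : T2) :
    leftSlice b2 (of i) (r (th j) * t) =
      (if i = j then leftSlice b2 1 t else 0) +
        tw Bf p (of j) (of i) • (th j * leftSlice b2 (of i) t) := by
  suffices (leftSlice b2 (of i)).comp (LinearMap.mulLeft Aq (r (th j))) =
      (if i = j then leftSlice b2 1 else 0) +
        tw Bf p (of j) (of i) • (LinearMap.mulLeft Aq (th j)).comp (leftSlice b2 (of i)) by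
    simpa [apply_ite, ite_apply] using LinearMap.congr_fun this t
  refine b2.ext fun ⟨w₁, w₂⟩ => ?_
  simp only [LinearMap.comp_apply, LinearMap.mulLeft_apply, r_th_mul_basis hmul hr, map_add,
    map_smul, leftSlice_basis, of_mul_eq_of_iff, LinearMap.add_apply, LinearMap.smul_apply]
  rcases eq_or_ne w₁ (of i) with rfl | h <;> rcases eq_or_ne i j with rfl | hij <;>
    simp [*, eq_comm, of_ne_one, ofW_mul, th_def, leftSlice_basis]

include hmul hr in
theorem rightSlice_one_mul_r_th (j : I) (t : T2) :
    rightSlice b2 1 (t * r (th j)) = rightSlice b2 1 t * th j := by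
  suffices (rightSlice b2 1).comp (LinearMap.mulRight Aq (r (th j))) =
      (LinearMap.mulRight Aq (th j)).comp (rightSlice b2 1) from LinearMap.congr_fun this t
  refine b2.ext fun ⟨w₁, w₂⟩ => ?_
  simp only [LinearMap.comp_apply, LinearMap.mulRight_apply, basis_mul_r_th hmul hr, map_add,
    map_smul, rightSlice_basis, if_neg (mul_of_ne_one _ _)]
  split_ifs with h
  · simp [h, tw_one_left, ofW_mul, th_def]
  · simp

include hmul hr in
theorem rightSlice_of_mul_r_th (i j : I) (t : T2) :
    rightSlice b2 (of i) (t * r (th j)) =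
      (if i = j then rightSlice b2 1 t else 0) +
        tw Bf p (of i) (of j) • (rightSlice b2 (of i) t * th j) := by
  suffices (rightSlice b2 (of i)).comp (LinearMap.mulRight Aq (r (th j))) =
      (if i = j then rightSlice b2 1 else 0) +
        tw Bf p (of i) (of j) • (LinearMap.mulRight Aq (th j)).comp (rightSlice b2 (of i)) by
    simpa [apply_ite, ite_apply] using LinearMap.congr_fun this t
  refine b2.ext fun ⟨w₁, w₂⟩ => ?_
  simp only [LinearMap.comp_apply, LinearMap.mulRight_apply, basis_mul_r_th hmul hr, map_add,
    map_smul, rightSlice_basis, mul_of_eq_of_iff, LinearMap.add_apply, LinearMap.smul_apply]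
  rcases eq_or_ne w₂ (of i) with rfl | h <;> rcases eq_or_ne i j with rfl | hij <;>
    simp [*, eq_comm, of_ne_one, ofW_mul, th_def, rightSlice_basis]

variable (hB : FormProps I Bf p d T2 b2 r B)

include hone hB in
theorem B_one_mul (y' y'' : FF I) : B 1 (y' * y'') = B 1 y' * B 1 y'' := by
  rw [hB.mul_right, sum_repr_r_one hone (fun w => B (ofW w) y') (fun w => B (ofW w) y''), ofW_one]

include hone hB in
theorem B_mul_one (x x' : FF I) : B (x * x') 1 = B x 1 * B x' 1 := by
  rw [hB.mul_left, sum_repr_r_one hone (fun w => B x (ofW w)) (fun w => B x' (ofW w)), ofW_one]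

include hr hB in
theorem B_th_mul (j : I) (y' y'' : FF I) :
    B (th j) (y' * y'') = B (th j) y' * B 1 y'' + B 1 y' * B (th j) y'' := by
  rw [hB.mul_right, sum_repr_r_th hr j (fun w => B (ofW w) y') (fun w => B (ofW w) y''), ofW_one,
    ← th_def]

include hr hB in
theorem B_mul_th (j : I) (x x' : FF I) :
    B (x * x') (th j) = B x (th j) * B x' 1 + B x 1 * B x' (th j) := by
  rw [hB.mul_left, sum_repr_r_th hr j (fun w => B x (ofW w)) (fun w => B x' (ofW w)), ofW_one,
    ← th_def]

include hr hB in
theorem B_one_th (j : I) : B 1 (th j) = 0 := by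
  simpa [hB.one_one] using B_mul_th hr hB j 1 1

include hr hB in
theorem B_th_one (j : I) : B (th j) 1 = 0 := by
  simpa [hB.one_one] using B_th_mul hr hB j 1 1

include hone hr hB in
theorem B_one_ofW (w : FreeMonoid I) : B 1 (ofW w) = if w = 1 then 1 else 0 := by
  cases w with
  | one => simp [ofW_one, hB.one_one]
  | of_mul j w => simp [ofW_mul, ← th_def, B_one_mul hone hB, B_one_th hr hB]

include hone hr hB in
theorem B_ofW_one (w : FreeMonoid I) : B (ofW w) 1 = if w = 1 then 1 else 0 := by
  cases w with
  | one => simp [ofW_one, hB.one_one]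
  | of_mul j w => simp [ofW_mul, ← th_def, B_mul_one hone hB, B_th_one hr hB]

include hone hr hB in
theorem B_th_ofW (i : I) (w : FreeMonoid I) :
    B (th i) (ofW w) = if w = of i then B (th i) (th i) else 0 := by
  cases w with
  | one => simp [ofW_one, B_th_one hr hB, (of_ne_one i).symm]
  | of_mul j w =>
    rw [ofW_mul, ← th_def, B_th_mul hr hB, B_one_th hr hB, zero_mul, add_zero, B_one_ofW hone hr hB]
    rcases eq_or_ne w 1 with rfl | hw
    · rcases eq_or_ne j i with rfl | hji
      · simp
      · simp [hB.gen i j, hji.symm, of_injective.ne hji]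
    · simp [hw, of_mul_eq_of_iff]

include hone hr hB in
theorem B_ofW_th (i : I) (w : FreeMonoid I) :
    B (ofW w) (th i) = if w = of i then B (th i) (th i) else 0 := by
  cases w with
  | one => simp [ofW_one, B_one_th hr hB, (of_ne_one i).symm]
  | of_mul j w =>
    rw [ofW_mul, ← th_def, B_mul_th hr hB, B_th_one hr hB, zero_mul, add_zero, B_ofW_one hone hr hB]
    rcases eq_or_ne w 1 with rfl | hw
    · rcases eq_or_ne j i with rfl | hji
      · simp
      · simp [hB.gen j i, hji, of_injective.ne hji]
    · simp [hw, of_mul_eq_of_iff]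

include hB in
theorem isUnit_B_th_th {i : I} (hd : 0 < d i) : IsUnit (B (th i) (th i)) := by
  rw [hB.gen, if_pos rfl]
  exact (isUnit_one_sub_pi'_mul_qi_zpow p d hd).inv

include hone hr hB in
theorem B_apply_one_eq_zero_of_mem_span_weight {ν : I →₀ ℕ} (hν : ν ≠ 0) {x : FF I}
    (hx : x ∈ Submodule.span Aq {z : FF I | ∃ w, wtF w = ν ∧ z = ofW w}) : B x 1 = 0 := by
  suffices Submodule.span Aq {z : FF I | ∃ w, wtF w = ν ∧ z = ofW w} ≤ LinearMap.ker (B.flip 1) by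
    simpa using this hx
  refine Submodule.span_le.mpr ?_
  rintro _ ⟨w, rfl, rfl⟩
  rcases eq_or_ne w 1 with rfl | hw
  · simp [wtF] at hν
  · simp [B_ofW_one hone hr hB, hw]

variable {irm : I → FF I →ₗ[Aq] FF I} (hir1 : ∀ i, irm i 1 = 0)
  (hirg : ∀ i j, irm i (th j) = if i = j then 1 else 0)
  (hirm : ∀ i (w w' : FreeMonoid I), irm i (ofW (w * w')) =
    irm i (ofW w) * ofW w' +
      (pA ^ (par p w * p i) * qA ^ wtB Bf w (of i)) • (ofW w * irm i (ofW w')))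
  (hsym : ∀ i j, Bf i j = Bf j i)
  {rim : I → FF I →ₗ[Aq] FF I} (hri1 : ∀ i, rim i 1 = 0)
  (hrig : ∀ i j, rim i (th j) = if i = j then 1 else 0)
  (hrim : ∀ i (w w' : FreeMonoid I), rim i (ofW (w * w')) =
    (pA ^ (par p w' * p i) * qA ^ wtB Bf w' (of i)) • (rim i (ofW w) * ofW w') +
      ofW w * rim i (ofW w'))

include hone hmul hr in
theorem leftSlice_one_r (x : FF I) : leftSlice b2 1 (r x) = x := by
  suffices (leftSlice b2 1).comp r.toLinearMap = LinearMap.id from LinearMap.congr_fun this x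
  refine linearMap_ext_ofW fun w => ?_
  induction w using FreeMonoid.inductionOn' with
  | one => simp [ofW_one, ← hone, leftSlice_basis]
  | of_mul j w ih =>
    simp only [LinearMap.comp_apply, AlgHom.toLinearMap_apply, LinearMap.id_apply] at ih ⊢
    rw [ofW_mul, map_mul, ← th_def, leftSlice_one_r_th_mul hmul hr, ih]

include hone hmul hr in
theorem rightSlice_one_r (x : FF I) : rightSlice b2 1 (r x) = x := by
  suffices (rightSlice b2 1).comp r.toLinearMap = LinearMap.id from LinearMap.congr_fun this x
  refine linearMap_ext_ofW fun w => ?_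
  induction w using FreeMonoid.inductionOn_mul_of with
  | one => simp [ofW_one, ← hone, rightSlice_basis]
  | mul_of w j ih =>
    simp only [LinearMap.comp_apply, AlgHom.toLinearMap_apply, LinearMap.id_apply] at ih ⊢
    rw [ofW_mul, map_mul, ← th_def, rightSlice_one_mul_r_th hmul hr, ih]

include hone hmul hr hir1 hirg hirm in
theorem leftSlice_of_r (i : I) (x : FF I) : leftSlice b2 (of i) (r x) = irm i x := by
  suffices (leftSlice b2 (of i)).comp r.toLinearMap = irm i from LinearMap.congr_fun this x
  refine linearMap_ext_ofW fun w => ?_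
  induction w using FreeMonoid.inductionOn' with
  | one => simp [ofW_one, ← hone, leftSlice_basis, hir1]
  | of_mul j w ih =>
    simp only [LinearMap.comp_apply, AlgHom.toLinearMap_apply] at ih ⊢
    rw [hirm, ofW_mul, map_mul, ← th_def, leftSlice_of_r_th_mul hmul hr, ih, hirg,
      leftSlice_one_r hone hmul hr, tw_of_of, par_of, wtB_of_of]
    by_cases hij : i = j <;> simp [hij]

include hone hmul hr hsym hri1 hrig hrim in
theorem rightSlice_of_r (i : I) (x : FF I) : rightSlice b2 (of i) (r x) = rim i x := by
  suffices (rightSlice b2 (of i)).comp r.toLinearMap = rim i from LinearMap.congr_fun this x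
  refine linearMap_ext_ofW fun w => ?_
  induction w using FreeMonoid.inductionOn_mul_of with
  | one => simp [ofW_one, ← hone, rightSlice_basis, hri1]
  | mul_of w j ih =>
    simp only [LinearMap.comp_apply, AlgHom.toLinearMap_apply] at ih ⊢
    rw [hrim, ofW_mul, map_mul, ← th_def, rightSlice_of_mul_r_th hmul hr, ih, hrig,
      rightSlice_one_r hone hmul hr, tw_of_of, par_of, wtB_of_of, hsym i j, mul_comm (p i)]
    by_cases hij : i = j <;> simp [hij, add_comm]

include hone hmul hr hB hir1 hirg hirm in
theorem B_th_mul_left (i : I) (x y : FF I) :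
    B (th i * y) x = B (th i) (th i) * B y (irm i x) := by
  rw [hB.mul_left, sum_repr_mul_eq_mul_leftSlice b2 (B_th_ofW hone hr hB i) (B y),
    leftSlice_of_r hone hmul hr hir1 hirg hirm]

include hone hmul hr hB hsym hri1 hrig hrim in
theorem B_mul_th_left (i : I) (x y : FF I) :
    B (y * th i) x = B (th i) (th i) * B y (rim i x) := by
  rw [hB.mul_left, sum_repr_mul_eq_mul_rightSlice b2 (B_th_ofW hone hr hB i) (B y),
    rightSlice_of_r hone hmul hr hsym hri1 hrig hrim]

include hone hmul hr hB hir1 hirg hirm in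
theorem B_th_mul_right (i : I) (x y : FF I) :
    B x (th i * y) = B (th i) (th i) * B (irm i x) y := by
  have h := sum_repr_mul_eq_mul_leftSlice b2 (B_ofW_th hone hr hB i) (B.flip y) (r x)
  simp only [LinearMap.flip_apply, leftSlice_of_r hone hmul hr hir1 hirg hirm] at h
  rw [hB.mul_right, h]

include hone hmul hr hB hsym hri1 hrig hrim in
theorem B_mul_th_right (i : I) (x y : FF I) :
    B x (y * th i) = B (th i) (th i) * B (rim i x) y := by
  have h := sum_repr_mul_eq_mul_rightSlice b2 (B_ofW_th hone hr hB i) (B.flip y) (r x)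
  simp only [LinearMap.flip_apply, rightSlice_of_r hone hmul hr hsym hri1 hrig hrim] at h
  rw [hB.mul_right, h]

include hone hmul hr hB hsym hri1 hrig hrim in
theorem B_eq_zero_of_B_apply_one_eq_zero_of_rim {x : FF I} (hx : B x 1 = 0)
    (hrad : ∀ i z, B (rim i x) z = 0) (z : FF I) : B x z = 0 := by
  suffices B x = 0 from LinearMap.congr_fun this z
  refine linearMap_ext_ofW fun w => ?_
  induction w using inductionOn_mul_of with
  | one => simpa [ofW_one] using hx
  | mul_of w i _ =>
    rw [ofW_mul, ← th_def, B_mul_th_right hone hmul hr hB hsym hri1 hrig hrim, hrad, mul_zero,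
      LinearMap.zero_apply]

end TwistedCoproduct

-- An element of `f = 'f/Rad` is represented by any lift `x : 'f`; it vanishes in `f` iff
-- `∀ z, B x z = 0`.
/-- The twisted derivations `ᵢr, rᵢ` are adjoint to left/right multiplication by `θ_i`:
`(θ_i y, x) = (θ_i,θ_i)(y, ᵢr(x))` and `(y θ_i, x) = (θ_i,θ_i)(y, rᵢ(x))`; they
preserve the radical of the form (hence descend to `f`); and if `x ∈ f` is homogeneous
of nonzero weight with `rᵢ(x) = 0` in `f` for all `i`, then `x = 0` in `f` (membership
in the radical expresses vanishing in `f = 'f/Rad`). -/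
theorem derivations_adjoint_and_kill
    (I : Type) [DecidableEq I] (Bf : I → I → ℤ) (p d : I → ℕ) (aij : I → I → ℤ)
    (hSCD : SCD I Bf p d aij)
    (T2 : Type) [Ring T2] [Algebra Aq T2]
    (b2 : Module.Basis (FreeMonoid I × FreeMonoid I) Aq T2)
    (hone : b2 (1, 1) = 1)
    (hmul : ∀ w1 w2 w1' w2', b2 (w1, w2) * b2 (w1', w2')
        = tw Bf p w2 w1' • b2 (w1 * w1', w2 * w2'))
    (r : FF I →ₐ[Aq] T2)
    (hr : ∀ i, r (th i) = b2 (FreeMonoid.of i, 1) + b2 (1, FreeMonoid.of i))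
    (B : FF I →ₗ[Aq] FF I →ₗ[Aq] Aq)
    (hB : FormProps I Bf p d T2 b2 r B)
    (irm rim : I → FF I →ₗ[Aq] FF I)
    (hir1 : ∀ i, irm i 1 = 0) (hri1 : ∀ i, rim i 1 = 0)
    (hirg : ∀ i j, irm i (th j) = if i = j then 1 else 0)
    (hrig : ∀ i j, rim i (th j) = if i = j then 1 else 0)
    (hirm : ∀ i (w w' : FreeMonoid I), irm i (ofW (w * w')) =
        irm i (ofW w) * ofW w' +
          (pA ^ (par p w * p i) * qA ^ wtB Bf w (FreeMonoid.of i)) •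
            (ofW w * irm i (ofW w')))
    (hrim : ∀ i (w w' : FreeMonoid I), rim i (ofW (w * w')) =
        (pA ^ (par p w' * p i) * qA ^ wtB Bf w' (FreeMonoid.of i)) •
          (rim i (ofW w) * ofW w') + ofW w * rim i (ofW w')) :
    (∀ i (x y : FF I), B (th i * y) x = B (th i) (th i) * B y (irm i x)) ∧
    (∀ i (x y : FF I), B (y * th i) x = B (th i) (th i) * B y (rim i x)) ∧
    (∀ i (x : FF I), (∀ z, B x z = 0) →
        (∀ z, B (irm i x) z = 0) ∧ (∀ z, B (rim i x) z = 0)) ∧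
    (∀ ν : I →₀ ℕ, ν ≠ 0 →
      ∀ x ∈ Submodule.span Aq {z : FF I | ∃ w, wtF w = ν ∧ z = ofW w},
        (∀ i, ∀ z, B (rim i x) z = 0) → ∀ z, B x z = 0) := by
  have hsym := hSCD.symm
  have cancel : ∀ i {t : Aq}, B (th i) (th i) * t = 0 → t = 0 := fun i _ =>
    (isUnit_B_th_th hB (hSCD.dpos i)).mul_right_eq_zero.mp
  refine ⟨B_th_mul_left hone hmul hr hB hir1 hirg hirm,
    B_mul_th_left hone hmul hr hB hsym hri1 hrig hrim,
    fun i x hx => ⟨fun z => cancel i ?_, fun z => cancel i ?_⟩,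
    fun ν hν x hx => B_eq_zero_of_B_apply_one_eq_zero_of_rim hone hmul hr hB hsym hri1 hrig hrim
      (B_apply_one_eq_zero_of_mem_span_weight hone hr hB hν hx)⟩
  · rw [← B_th_mul_right hone hmul hr hB hir1 hirg hirm, hx]
  · rw [← B_mul_th_right hone hmul hr hB hsym hri1 hrig hrim, hx]
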